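/- (Theorem flat, Hopf–Lax form.) Let J be a nonempty closed interval of ℝ, and suppose u_T takes values in J and satisfies the Oleinik condition (O) at T. Then U_o^♭ is Lipschitz continuous with a.e. derivative in J, and for every x ∈ ℝ one has U_T(x) = inf_{ξ ∈ ℝ} [U_o^♭(ξ) + T·f*((x − ξ)/T)]; that is, the Hopf–Lax evolution at time T of U_o^♭ equals U_T. -/

import Mathlib

open Filter MeasureTheory

/-- Condition (f): `f` is `C²`, strongly convex (`f'' > 0` everywhere), and
`f' → ∓∞` at `∓∞`. -/
def CondF (f : ℝ → ℝ) : Prop :=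
  ContDiff ℝ 2 f ∧ (∀ x, 0 < deriv (deriv f) x) ∧
    Tendsto (deriv f) atBot atBot ∧ Tendsto (deriv f) atTop atTop

/-- The Legendre transform `f*(y) = sup_x (y·x − f(x))`. -/
noncomputable def legendre (f : ℝ → ℝ) (y : ℝ) : ℝ :=
  sSup (Set.range fun x => y * x - f x)

/-- `U_T(x) = ∫_{x̌}^x u_T`. -/
noncomputable def UT (uT : ℝ → ℝ) (xc x : ℝ) : ℝ := ∫ ξ in xc..x, uT ξ

/-- `U_o^♭(x) = sup_ξ [U_T(ξ) − T f*((ξ−x)/T)]`. -/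
noncomputable def Uflat (f : ℝ → ℝ) (T : ℝ) (uT : ℝ → ℝ) (xc x : ℝ) : ℝ :=
  sSup (Set.range fun ξ => UT uT xc ξ - T * legendre f ((ξ - x) / T))

/-- `M(x)`: the set of maximizers in the definition of `U_o^♭(x)`. -/
def MSet (f : ℝ → ℝ) (T : ℝ) (uT : ℝ → ℝ) (xc x : ℝ) : Set ℝ :=
  {ξ | UT uT xc ξ = Uflat f T uT xc x + T * legendre f ((ξ - x) / T)}

/-- Oleinik condition (O) at `T`. -/
def Oleinik (f : ℝ → ℝ) (T : ℝ) (uT : ℝ → ℝ) : Prop :=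
  ∀ x Δ : ℝ, 0 < Δ → deriv f (uT (x + Δ)) - deriv f (uT x) ≤ Δ / T

/-- The Hopf–Lax operator at time `T`: `(S_T U)(x) = inf_ξ [U(ξ) + T f*((x−ξ)/T)]`. -/
noncomputable def HopfLax (f : ℝ → ℝ) (T : ℝ) (U : ℝ → ℝ) (x : ℝ) : ℝ :=
  sInf (Set.range fun ξ => U ξ + T * legendre f ((x - ξ) / T))

/-- Left continuity of a real function. -/
def LeftCts (u : ℝ → ℝ) : Prop :=
  ∀ x, Tendsto u (nhdsWithin x (Set.Iio x)) (nhds (u x))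

/-- `II_T(U_T; J)`: Lipschitz functions with a.e. derivative in `J` evolving into `U_T`
under the Hopf–Lax semigroup. -/
def IIT (f : ℝ → ℝ) (T : ℝ) (uT : ℝ → ℝ) (xc : ℝ) (J : Set ℝ) : Set (ℝ → ℝ) :=
  {U | (∃ K, LipschitzWith K U) ∧ (∀ᵐ x ∂volume, deriv U x ∈ J) ∧
    ∀ x, HopfLax f T U x = UT uT xc x}

/-- `U_o^♯(x) = sup { U(x) : U ∈ II_T(U_T; J) }`. -/
noncomputable def Usharp (f : ℝ → ℝ) (T : ℝ) (uT : ℝ → ℝ) (xc : ℝ) (J : Set ℝ) (x : ℝ) : ℝ :=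
  sSup ((fun U : ℝ → ℝ => U x) '' IIT f T uT xc J)


/-!
If `m ≤ u_T ≤ M`, the difference quotients of `U_T` lie in `[m, M]`, and since `U_o^♭` is a
supremum of translates of `U_T` minus a common kernel, its difference quotients do too. With
`m = inf u_T` and `M = sup u_T` this gives the Lipschitz bound and, `J` being closed and convex,
an a.e. derivative in `J`.

The inequality `S_T U_o^♭ ≥ U_T` holds by the definition of `U_o^♭`. Equality at `x` comes from
`ξ = x - T f'(u_T x)`. The profile `s ↦ (f')⁻¹((s - ξ)/T)` is the rarefaction wave centred at `ξ`,
and it is the derivative of `s ↦ T f*((s - ξ)/T)`. The Oleinik condition puts `u_T` below this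
wave to the right of `x` and above it to the left. Integrating these inequalities shows that `x`
maximises `η ↦ U_T(η) - T f*((η - ξ)/T)`, i.e. `x ∈ M(ξ)`, and then `U_o^♭(ξ) + T f*((x - ξ)/T)`
equals `U_T(x)`.
-/

open Set

section Legendre

variable {f : ℝ → ℝ}

theorem add_deriv_mul_sub_le (hd : Differentiable ℝ f) (hmono : Monotone (deriv f)) (a x : ℝ) :
    f a + deriv f a * (x - a) ≤ f x := by
  rcases le_total a x with hax | hxa
  · have := (convex_Ici a).mul_sub_le_image_sub_of_le_deriv hd.continuous.continuousOn
      hd.differentiableOn (fun y hy => hmono (interior_Ici (a := a) ▸ hy).le) a self_mem_Ici x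
      hax hax
    linarith
  · have := (convex_Iic a).image_sub_le_mul_sub_of_deriv_le hd.continuous.continuousOn
      hd.differentiableOn (fun y hy => hmono (interior_Iic (a := a) ▸ hy).le) x hxa a
      self_mem_Iic hxa
    linarith

namespace CondF

theorem differentiable (hf : CondF f) : Differentiable ℝ f := hf.1.differentiable two_ne_zero

theorem strictMono_deriv (hf : CondF f) : StrictMono (deriv f) := strictMono_of_deriv_pos hf.2.1

theorem hasDerivAt_deriv (hf : CondF f) (x : ℝ) : HasDerivAt (deriv f) (deriv (deriv f) x) x :=
  ((contDiff_succ_iff_deriv.1 hf.1).2.2.differentiable one_ne_zero x).hasDerivAt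

noncomputable def derivOrderIso (hf : CondF f) : ℝ ≃o ℝ :=
  StrictMono.orderIsoOfSurjective (deriv f) hf.strictMono_deriv
    ((hf.1.continuous_deriv one_le_two).surjective hf.2.2.2 hf.2.2.1)

@[simp]
theorem derivOrderIso_apply (hf : CondF f) (x : ℝ) : hf.derivOrderIso x = deriv f x := rfl

theorem le_tangent (hf : CondF f) (a x : ℝ) : f a + deriv f a * (x - a) ≤ f x :=
  add_deriv_mul_sub_le hf.differentiable hf.strictMono_deriv.monotone a x

theorem bddAbove_range_legendre (hf : CondF f) (y : ℝ) :
    BddAbove (range fun x => y * x - f x) := by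
  obtain ⟨c, rfl⟩ := hf.derivOrderIso.surjective y
  refine ⟨deriv f c * c - f c, forall_mem_range.2 fun x => ?_⟩
  have := hf.le_tangent c x
  simp only [derivOrderIso_apply]
  linarith

theorem le_legendre (hf : CondF f) (y x : ℝ) : y * x - f x ≤ legendre f y :=
  le_csSup (hf.bddAbove_range_legendre y) ⟨x, rfl⟩

theorem legendre_deriv (hf : CondF f) (c : ℝ) : legendre f (deriv f c) = deriv f c * c - f c :=
  le_antisymm (csSup_le (range_nonempty _) (forall_mem_range.2 fun x => by
    have := hf.le_tangent c x; linarith)) (hf.le_legendre _ c)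

theorem hasDerivAt_legendre (hf : CondF f) (y : ℝ) :
    HasDerivAt (legendre f) (hf.derivOrderIso.symm y) y := by
  set g : ℝ → ℝ := ⇑hf.derivOrderIso.symm
  have hfg : ∀ y, deriv f (g y) = y := hf.derivOrderIso.apply_symm_apply
  have hg : HasDerivAt g (deriv (deriv f) (g y))⁻¹ y :=
    .of_local_left_inverse hf.derivOrderIso.symm.continuous.continuousAt
      (hf.hasDerivAt_deriv (g y)) (hf.2.1 _).ne' (Eventually.of_forall hfg)
  have hleg : legendre f = fun y => y * g y - f (g y) := by
    funext y; conv_lhs => rw [← hfg y, hf.legendre_deriv, hfg]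
  rw [hleg]
  refine (((hasDerivAt_id' y).fun_mul hg).fun_sub
    ((hf.differentiable (g y)).hasDerivAt.comp y hg)).congr_deriv ?_
  rw [hfg]
  ring

end CondF

end Legendre

theorem Icc_ciInf_ciSup_subset {ι α : Type*} [Nonempty ι] [ConditionallyCompleteLinearOrder α]
    [TopologicalSpace α] [OrderTopology α] {u : ι → α} {J : Set α} (hJ : IsClosed J)
    (hJoc : J.OrdConnected) (hb : BddBelow (range u)) (ha : BddAbove (range u))
    (huJ : ∀ i, u i ∈ J) : Icc (⨅ i, u i) (⨆ i, u i) ⊆ J :=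
  have hrange : closure (range u) ⊆ J := closure_minimal (range_subset_iff.2 huJ) hJ
  hJoc.out (hrange (csInf_mem_closure (range_nonempty u) hb))
    (hrange (csSup_mem_closure (range_nonempty u) ha))

def SlopesIn (U : ℝ → ℝ) (m M : ℝ) : Prop :=
  Monotone (fun x => U x - m * x) ∧ Monotone (fun x => M * x - U x)

namespace SlopesIn

variable {U : ℝ → ℝ} {m M : ℝ}

theorem le_sub (hU : SlopesIn U m M) {a b : ℝ} (hab : a ≤ b) : m * (b - a) ≤ U b - U a := by
  have := hU.1 hab; simp only at this; linarith

theorem sub_le (hU : SlopesIn U m M) {a b : ℝ} (hab : a ≤ b) : U b - U a ≤ M * (b - a) := by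
  have := hU.2 hab; simp only at this; linarith

theorem lipschitzWith (hU : SlopesIn U m M) : LipschitzWith (max |m| |M|).toNNReal U := by
  refine LipschitzWith.of_le_add_mul' _ fun a b => ?_
  rw [Real.dist_eq]
  rcases le_total a b with hab | hba
  · have h := hU.le_sub hab
    have : -m * (b - a) ≤ max |m| |M| * |a - b| := by
      rw [abs_sub_comm, abs_of_nonneg (sub_nonneg.2 hab)]
      exact mul_le_mul_of_nonneg_right ((neg_le_abs m).trans (le_max_left _ _)) (by linarith)
    linarith
  · have h := hU.sub_le hba
    have : M * (a - b) ≤ max |m| |M| * |a - b| := by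
      rw [abs_of_nonneg (sub_nonneg.2 hba)]
      exact mul_le_mul_of_nonneg_right ((le_abs_self M).trans (le_max_right _ _)) (by linarith)
    linarith

theorem mem_Icc_of_hasDerivAt (hU : SlopesIn U m M) {d x : ℝ} (hd : HasDerivAt U d x) :
    d ∈ Icc m M := by
  have hlow := hU.1.deriv_nonneg (x := x)
  have hupp := hU.2.deriv_nonneg (x := x)
  rw [(hd.fun_sub ((hasDerivAt_id' x).const_mul m)).deriv] at hlow
  rw [(((hasDerivAt_id' x).const_mul M).fun_sub hd).deriv] at hupp
  constructor <;> linarith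

end SlopesIn

section IntervalIntegral

variable {uT : ℝ → ℝ} {m M : ℝ}

theorem intervalIntegrable_of_mem_Icc (huT : Measurable uT) (hu : ∀ s, uT s ∈ Icc m M)
    (a b : ℝ) : IntervalIntegrable uT volume a b :=
  IntervalIntegrable.mono_fun (intervalIntegrable_const (c := max |m| |M|))
    huT.aestronglyMeasurable.restrict (Eventually.of_forall fun s => by
      simp only [Real.norm_eq_abs, abs_of_nonneg ((abs_nonneg m).trans (le_max_left _ _))]
      exact abs_le_max_abs_abs (hu s).1 (hu s).2)

theorem UT_sub_UT (huT : Measurable uT) (hu : ∀ s, uT s ∈ Icc m M) (xc a b : ℝ) :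
    UT uT xc b - UT uT xc a = ∫ s in a..b, uT s :=
  intervalIntegral.integral_interval_sub_left (intervalIntegrable_of_mem_Icc huT hu _ _)
    (intervalIntegrable_of_mem_Icc huT hu _ _)

theorem slopesIn_UT (huT : Measurable uT) (hu : ∀ s, uT s ∈ Icc m M) (xc : ℝ) :
    SlopesIn (UT uT xc) m M := by
  have hii := intervalIntegrable_of_mem_Icc huT hu
  constructor <;> intro a b hab <;> have hsub := UT_sub_UT huT hu xc a b
  · have : ∫ _ in a..b, m ≤ ∫ s in a..b, uT s :=
      intervalIntegral.integral_mono_on hab intervalIntegrable_const (hii a b)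
        fun s _ => (hu s).1
    simp only [intervalIntegral.integral_const, smul_eq_mul] at this ⊢
    linarith
  · have : ∫ s in a..b, uT s ≤ ∫ _ in a..b, M :=
      intervalIntegral.integral_mono_on hab (hii a b) intervalIntegrable_const
        fun s _ => (hu s).2
    simp only [intervalIntegral.integral_const, smul_eq_mul] at this ⊢
    linarith

end IntervalIntegral

section HopfLax

variable {f : ℝ → ℝ} {T : ℝ} {uT : ℝ → ℝ} {xc : ℝ} {m M : ℝ}

theorem SlopesIn.sub_legendre_le {U : ℝ → ℝ} (hf : CondF f) (hT : 0 < T) (hU : SlopesIn U m M)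
    (x ξ : ℝ) : U ξ - T * legendre f ((ξ - x) / T) ≤ U x + T * max (f m) (f M) := by
  have hscale : ∀ p, (ξ - x) * p - T * f p ≤ T * legendre f ((ξ - x) / T) := fun p => by
    have h := mul_le_mul_of_nonneg_left (hf.le_legendre ((ξ - x) / T) p) hT.le
    rwa [mul_sub, ← mul_assoc, mul_div_cancel₀ _ hT.ne'] at h
  have hm := mul_le_mul_of_nonneg_left (le_max_left (f m) (f M)) hT.le
  have hM := mul_le_mul_of_nonneg_left (le_max_right (f m) (f M)) hT.le
  rcases le_total x ξ with h | h
  · linarith [hU.sub_le h, hscale M]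
  · linarith [hU.le_sub h, hscale m]

theorem SlopesIn.bddAbove_range_UT_sub_legendre (hf : CondF f) (hT : 0 < T)
    (hU : SlopesIn (UT uT xc) m M) (x : ℝ) :
    BddAbove (range fun ξ => UT uT xc ξ - T * legendre f ((ξ - x) / T)) :=
  ⟨_, forall_mem_range.2 (hU.sub_legendre_le hf hT x)⟩

theorem le_Uflat {x : ℝ}
    (hbdd : BddAbove (range fun ξ => UT uT xc ξ - T * legendre f ((ξ - x) / T))) (ξ : ℝ) :
    UT uT xc ξ - T * legendre f ((ξ - x) / T) ≤ Uflat f T uT xc x :=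
  le_csSup hbdd ⟨ξ, rfl⟩

theorem Uflat_le {x c : ℝ} (h : ∀ ξ, UT uT xc ξ - T * legendre f ((ξ - x) / T) ≤ c) :
    Uflat f T uT xc x ≤ c :=
  csSup_le (range_nonempty _) (forall_mem_range.2 h)

theorem slopesIn_Uflat (hf : CondF f) (hT : 0 < T) (hU : SlopesIn (UT uT xc) m M) :
    SlopesIn (Uflat f T uT xc) m M := by
  have hbdd := hU.bddAbove_range_UT_sub_legendre hf hT
  constructor <;> intro a b hab <;> simp only
  · suffices Uflat f T uT xc a ≤ Uflat f T uT xc b - m * (b - a) by linarith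
    refine Uflat_le fun ξ => ?_
    have h := le_Uflat (hbdd b) (ξ + (b - a))
    rw [show ξ + (b - a) - b = ξ - a by ring] at h
    linarith [hU.le_sub (show ξ ≤ ξ + (b - a) by linarith)]
  · suffices Uflat f T uT xc b ≤ Uflat f T uT xc a + M * (b - a) by linarith
    refine Uflat_le fun ξ => ?_
    have h := le_Uflat (hbdd a) (ξ - (b - a))
    rw [show ξ - (b - a) - a = ξ - b by ring] at h
    linarith [hU.sub_le (show ξ - (b - a) ≤ ξ by linarith)]

theorem mem_MSet_of_forall_le {x ξ : ℝ}
    (hbdd : BddAbove (range fun η => UT uT xc η - T * legendre f ((η - ξ) / T)))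
    (h : ∀ η, UT uT xc η - T * legendre f ((η - ξ) / T) ≤
      UT uT xc x - T * legendre f ((x - ξ) / T)) :
    x ∈ MSet f T uT xc ξ := by
  have := le_antisymm (Uflat_le h) (le_Uflat hbdd x)
  simp only [MSet, mem_ofPred_eq]
  linarith

theorem hopfLax_Uflat_of_mem_MSet {x ξ : ℝ}
    (hbdd : ∀ η, BddAbove (range fun ζ => UT uT xc ζ - T * legendre f ((ζ - η) / T)))
    (hx : x ∈ MSet f T uT xc ξ) : HopfLax f T (Uflat f T uT xc) x = UT uT xc x := by
  have hge : ∀ η, UT uT xc x ≤ Uflat f T uT xc η + T * legendre f ((x - η) / T) :=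
    fun η => by linarith [le_Uflat (hbdd η) x]
  exact le_antisymm (csInf_le ⟨_, forall_mem_range.2 hge⟩ ⟨ξ, hx.symm⟩)
    (le_csInf (range_nonempty _) (forall_mem_range.2 hge))

theorem CondF.intervalIntegrable_derivOrderIso_symm (hf : CondF f) (ξ a b : ℝ) :
    IntervalIntegrable (fun s => hf.derivOrderIso.symm ((s - ξ) / T)) volume a b :=
  (hf.derivOrderIso.symm.continuous.comp (by fun_prop)).intervalIntegrable a b

theorem CondF.integral_derivOrderIso_symm (hf : CondF f) (hT : T ≠ 0) (ξ a b : ℝ) :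
    ∫ s in a..b, hf.derivOrderIso.symm ((s - ξ) / T) =
      T * legendre f ((b - ξ) / T) - T * legendre f ((a - ξ) / T) := by
  refine intervalIntegral.integral_eq_sub_of_hasDerivAt
    (f := fun t => T * legendre f ((t - ξ) / T)) (fun s _ => ?_)
    (hf.intervalIntegrable_derivOrderIso_symm ξ a b)
  have hinner : HasDerivAt (fun t => (t - ξ) / T) (1 / T) s := by
    simpa using ((hasDerivAt_id s).sub_const ξ).div_const T
  refine (((hf.hasDerivAt_legendre _).comp s hinner).const_mul T).congr_deriv ?_
  field_simp

theorem Oleinik.deriv_le_of_le (hO : Oleinik f T uT) (hT : 0 < T) {x s : ℝ} (hxs : x ≤ s) :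
    deriv f (uT s) ≤ (s - (x - T * deriv f (uT x))) / T := by
  rw [show (s - (x - T * deriv f (uT x))) / T = deriv f (uT x) + (s - x) / T by
    field_simp; ring]
  rcases hxs.eq_or_lt with rfl | hlt
  · simp
  · have := hO x (s - x) (sub_pos.2 hlt)
    rw [add_sub_cancel] at this
    linarith

theorem Oleinik.le_deriv_of_le (hO : Oleinik f T uT) (hT : 0 < T) {x s : ℝ} (hsx : s ≤ x) :
    (s - (x - T * deriv f (uT x))) / T ≤ deriv f (uT s) := by
  rw [show (s - (x - T * deriv f (uT x))) / T = deriv f (uT x) - (x - s) / T by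
    field_simp; ring]
  rcases hsx.eq_or_lt with rfl | hlt
  · simp
  · have := hO s (x - s) (sub_pos.2 hlt)
    rw [add_sub_cancel] at this
    linarith

theorem Oleinik.mem_MSet (hO : Oleinik f T uT) (hf : CondF f) (hT : 0 < T)
    (huT : Measurable uT) (hu : ∀ s, uT s ∈ Icc m M) (x : ℝ) :
    x ∈ MSet f T uT xc (x - T * deriv f (uT x)) := by
  set ξ := x - T * deriv f (uT x)
  have hg := hf.intervalIntegrable_derivOrderIso_symm (T := T) ξ
  have hii := intervalIntegrable_of_mem_Icc huT hu
  have hint := hf.integral_derivOrderIso_symm hT.ne' ξ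
  refine mem_MSet_of_forall_le ((slopesIn_UT huT hu xc).bddAbove_range_UT_sub_legendre hf hT ξ)
    fun η => ?_
  rcases le_total x η with hxη | hηx
  · have := intervalIntegral.integral_mono_on hxη (hii x η) (hg x η) fun s hs =>
      hf.derivOrderIso.le_symm_apply.2 (hO.deriv_le_of_le hT hs.1)
    rw [← UT_sub_UT huT hu xc, hint] at this
    linarith
  · have := intervalIntegral.integral_mono_on hηx (hg η x) (hii η x) fun s hs =>
      hf.derivOrderIso.symm_apply_le.2 (hO.le_deriv_of_le hT hs.2)
    rw [← UT_sub_UT huT hu xc, hint] at this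
    linarith

end HopfLax

theorem stmt_10_general (f : ℝ → ℝ) (hf : CondF f) (T : ℝ) (hT : 0 < T)
    (J : Set ℝ) (hJcl : IsClosed J) (hJoc : J.OrdConnected)
    (uT : ℝ → ℝ) (huT : Measurable uT) (C : ℝ) (hC : ∀ x, |uT x| ≤ C)
    (huTJ : ∀ x, uT x ∈ J) (hO : Oleinik f T uT) (xc : ℝ) :
    (∃ K, LipschitzWith K (Uflat f T uT xc)) ∧
    (∀ᵐ x ∂volume, HasDerivAt (Uflat f T uT xc) (deriv (Uflat f T uT xc) x) x ∧
      deriv (Uflat f T uT xc) x ∈ J) ∧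
    ∀ x : ℝ, HopfLax f T (Uflat f T uT xc) x = UT uT xc x := by
  have hb : BddBelow (range uT) := ⟨-C, forall_mem_range.2 fun s => (abs_le.1 (hC s)).1⟩
  have ha : BddAbove (range uT) := ⟨C, forall_mem_range.2 fun s => (abs_le.1 (hC s)).2⟩
  have hu : ∀ s, uT s ∈ Icc (⨅ s, uT s) (⨆ s, uT s) := fun s => ⟨ciInf_le hb s, le_ciSup ha s⟩
  have hUT := slopesIn_UT huT hu xc
  have hflat := slopesIn_Uflat hf hT hUT
  refine ⟨⟨_, hflat.lipschitzWith⟩, ?_, fun x =>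
    hopfLax_Uflat_of_mem_MSet (hUT.bddAbove_range_UT_sub_legendre hf hT)
      (hO.mem_MSet hf hT huT hu x)⟩
  filter_upwards [hflat.lipschitzWith.ae_differentiableAt] with x hx
  exact ⟨hx.hasDerivAt, Icc_ciInf_ciSup_subset hJcl hJoc hb ha huTJ
    (hflat.mem_Icc_of_hasDerivAt hx.hasDerivAt)⟩

theorem stmt_10 (f : ℝ → ℝ) (hf : CondF f) (T : ℝ) (hT : 0 < T)
    (J : Set ℝ) (hJne : J.Nonempty) (hJcl : IsClosed J) (hJoc : J.OrdConnected)
    (uT : ℝ → ℝ) (huT : Measurable uT) (C : ℝ) (hC : ∀ x, |uT x| ≤ C)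
    (huTJ : ∀ x, uT x ∈ J) (hO : Oleinik f T uT) (xc : ℝ) :
    (∃ K, LipschitzWith K (Uflat f T uT xc)) ∧
    (∀ᵐ x ∂volume, HasDerivAt (Uflat f T uT xc) (deriv (Uflat f T uT xc) x) x ∧
      deriv (Uflat f T uT xc) x ∈ J) ∧
    ∀ x : ℝ, HopfLax f T (Uflat f T uT xc) x = UT uT xc x :=
  stmt_10_general f hf T hT J hJcl hJoc uT huT C hC huTJ hO xc
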